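/- Fix real numbers λ₁,…,λ_N that are pairwise distinct and N ≥ 2. For configurations η : {1,…,N} → ℕ, define the weight π(η) = ∏_{k=1}^N a(2η_k)/(2^{η_k} η_k!) where a(2n) = (2n−1)!!, and for i ≠ j with η_i ≥ 1 define the jump rate c(η, η^{i,j}) = 2η_i(1 + 2η_j)/(N(λ_i − λ_j)²), where η^{i,j} is obtained from η by moving one particle from site i to site j. Then detailed balance holds: π(η)·c(η, η^{i,j}) = π(η^{i,j})·c(η^{i,j}, η) for all configurations η with η_i ≥ 1 and all i ≠ j. Consequently π is a reversible measure for the symmetric eigenvector moment flow. -/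
import Mathlib

open Finset

lemma odd_df_real (l : ℕ) :
    ((2 * l + 1).doubleFactorial : ℝ) = (2 * l + 1) * (2 * l - 1).doubleFactorial := by
  cases l with
  | zero => simp [Nat.doubleFactorial]
  | succ k =>
    have h1 : 2 * (k + 1) + 1 = (2 * k + 1) + 2 := by ring
    have h2 : 2 * (k + 1) - 1 = 2 * k + 1 := by omega
    rw [h1, h2, Nat.doubleFactorial_add_two]
    push_cast; ring

/-- Detailed balance for the symmetric eigenvector moment flow: the measure
`π(η) = ∏_k (2η_k−1)!!/(2^{η_k} η_k!)` is reversible for the jump rates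
`c(η, η^{i,j}) = 2η_i(1+2η_j)/(N(λ_i−λ_j)²)`. -/
theorem stmt_10 {N : ℕ} (hN : 2 ≤ N) (lam : Fin N → ℝ)
    (hdist : ∀ i j : Fin N, i ≠ j → lam i ≠ lam j)
    (η : Fin N → ℕ) (i j : Fin N) (hij : i ≠ j) (hηi : 1 ≤ η i) :
    (∏ k, ((Nat.doubleFactorial (2 * η k - 1) : ℝ) / (2 ^ η k * Nat.factorial (η k))))
        * (2 * η i * (1 + 2 * η j) / (N * (lam i - lam j) ^ 2))
      = (∏ k, ((Nat.doubleFactorial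
              (2 * (Function.update (Function.update η i (η i - 1)) j (η j + 1)) k - 1) : ℝ)
            / (2 ^ (Function.update (Function.update η i (η i - 1)) j (η j + 1)) k
                * Nat.factorial ((Function.update (Function.update η i (η i - 1)) j (η j + 1)) k))))
        * (2 * (η j + 1) * (1 + 2 * (η i - 1)) / (N * (lam i - lam j) ^ 2)) := by
  obtain ⟨l, hl⟩ : ∃ l, η i = l + 1 := ⟨η i - 1, by omega⟩
  set η' := Function.update (Function.update η i (η i - 1)) j (η j + 1) with hη'
  have hji : j ≠ i := hij.symm
  have hη'i : η' i = l := by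
    rw [hη', Function.update_of_ne hij, Function.update_self, hl]; omega
  have hη'j : η' j = η j + 1 := by rw [hη', Function.update_self]
  have hη'k : ∀ k, k ≠ i → k ≠ j → η' k = η k := by
    intro k hki hkj
    rw [hη', Function.update_of_ne hkj, Function.update_of_ne hki]
  have hjmem : j ∈ (univ : Finset (Fin N)).erase i := by simp [hji]
  have hsplit : ∀ f : Fin N → ℝ,
      ∏ k, f k = f i * (f j * ∏ k ∈ (univ.erase i).erase j, f k) := by
    intro f
    rw [← Finset.mul_prod_erase univ f (mem_univ i),
      ← Finset.mul_prod_erase _ f hjmem]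
  rw [hsplit, hsplit]
  have htail : ∏ k ∈ (univ.erase i).erase j,
      ((Nat.doubleFactorial (2 * η' k - 1) : ℝ) / (2 ^ η' k * Nat.factorial (η' k)))
      = ∏ k ∈ (univ.erase i).erase j,
      ((Nat.doubleFactorial (2 * η k - 1) : ℝ) / (2 ^ η k * Nat.factorial (η k))) := by
    apply Finset.prod_congr rfl
    intro k hk
    simp only [mem_erase] at hk
    rw [hη'k k hk.2.1 hk.1]
  rw [htail, hη'i, hη'j, hl]
  set n := η j
  set T := ∏ k ∈ (univ.erase i).erase j,
      ((Nat.doubleFactorial (2 * η k - 1) : ℝ) / (2 ^ η k * Nat.factorial (η k)))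
  have h1 : 2 * (l + 1) - 1 = 2 * l + 1 := by omega
  have h2 : 2 * (n + 1) - 1 = 2 * n + 1 := by omega
  rw [h1, h2, odd_df_real, odd_df_real]
  have hNne : (N : ℝ) ≠ 0 := by positivity
  have hd : lam i - lam j ≠ 0 := sub_ne_zero.mpr (hdist i j hij)
  have hfl : (Nat.factorial l : ℝ) ≠ 0 := by positivity
  have hfn : (Nat.factorial n : ℝ) ≠ 0 := by positivity
  have hpl : (2 : ℝ) ^ l ≠ 0 := by positivity
  have hpn : (2 : ℝ) ^ n ≠ 0 := by positivity
  rw [Nat.factorial_succ (l), Nat.factorial_succ n]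
  push_cast
  rw [pow_succ, pow_succ]
  field_simp
  ring
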